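/- Let p be an odd prime and let s be an integer with 0 < s < p−1. Then the polynomial identity b_{1,s}(α) = b_{1,p−1−s}(α) holds in F_p[α]. -/

import Mathlib

noncomputable def binomF {K : Type*} [Field K] (f : K) (m : ℕ) : K :=
  Polynomial.eval f (descPochhammer K m) / (m.factorial : K)

noncomputable def bPoly (p : ℕ) [Fact p.Prime] (r s : ℕ) : Polynomial (ZMod p) :=
  ∑ k ∈ Finset.range p,
    Polynomial.C ((-(r : ZMod p) / (s : ZMod p)) ^ k /
        (((p - 1 - k).factorial : ZMod p) * (k.factorial : ZMod p))) *
      Polynomial.eval (Polynomial.C (r : ZMod p) * Polynomial.X - 1)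
        (descPochhammer (Polynomial (ZMod p)) (p - 1 - k)) *
      Polynomial.eval (Polynomial.C (s : ZMod p) * Polynomial.X - 1)
        (descPochhammer (Polynomial (ZMod p)) k)

/-!
Fix `x ∈ 𝔽_p`. A binomial coefficient `C(y, k)` with `k < p` only depends on `y mod p`, so
`b_{1,s}(x)` is the coefficient of `X^(p-1)` in `(1 + X)^a (1 - X/s)^b` for natural numbers
`a ≡ x - 1`, `b ≡ s x - 1`. Pfaff's transformation followed by the substitution `X ↦ -s X`
(harmless on that coefficient, by Fermat) turns it into the coefficient of `X^(p-1)` in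
`(1 + τX)^n (1 + σX)^(m+1)`, where `σ = s`, `τ = s + 1`, `n ≡ σx - 1`, `m ≡ -τx - 1`; as
`p - 1 - s ≡ -τ`, the same computation gives `(1 + σX)^m (1 + τX)^(n+1)` for `b_{1,p-1-s}(x)`.
The two polynomials differ by `(σ - τ) X (1 + σX)^m (1 + τX)^n`, and for `x ≠ 0` its
coefficient of `X^(p-1)` vanishes, because in characteristic `p` no derivative has a term in
`X^(p-1)`. At `x = 0` both values are `1`. Both sides have degree `< p`, so they are equal.
-/

open Polynomial Finset
open scoped Nat

lemma coeff_one_add_C_mul_X_pow {R : Type*} [CommSemiring R] (μ : R) (n k : ℕ) :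
    ((1 + C μ * X) ^ n).coeff k = n.choose k * μ ^ k := by
  rw [show (1 + C μ * X) ^ n = ((1 + X) ^ n).comp (C μ * X) by simp, comp_C_mul_X_coeff,
    coeff_one_add_X_pow]

lemma descPochhammer_eval_eq_comp {R : Type*} [CommRing R] (q : R[X]) (m : ℕ) :
    (descPochhammer R[X] m).eval q = (descPochhammer R m).comp q := by
  rw [← descPochhammer_map C, eval_map]
  rfl

lemma natDegree_descPochhammer_eval_C_mul_X_sub_one_le {R : Type*} [CommRing R] [IsDomain R]
    (r : R) (m : ℕ) : ((descPochhammer R[X] m).eval (C r * X - 1)).natDegree ≤ m := by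
  rw [descPochhammer_eval_eq_comp]
  refine natDegree_comp_le.trans ?_
  rw [descPochhammer_natDegree]
  have hq : (C r * X - 1).natDegree ≤ 1 :=
    (natDegree_sub_le _ _).trans (by simpa using (natDegree_C_mul_le r X).trans natDegree_X_le)
  exact (Nat.mul_le_mul_left m hq).trans_eq (mul_one m)

section CharP

variable {K : Type*} [Field K] {p : ℕ} [Fact p.Prime] [CharP K p]

lemma natCast_factorial_ne_zero_of_lt {k : ℕ} (hk : k < p) : (k ! : K) ≠ 0 := by
  rw [Ne, CharP.cast_eq_zero_iff K p, (Fact.out : p.Prime).dvd_factorial]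
  omega

lemma natCast_choose_eq_descPochhammer_div (n : ℕ) {k : ℕ} (hk : k < p) :
    (n.choose k : K) = (descPochhammer K k).eval (n : K) / k ! := by
  rw [eq_div_iff (natCast_factorial_ne_zero_of_lt hk), descPochhammer_eval_eq_descFactorial,
    Nat.descFactorial_eq_factorial_mul_choose, Nat.cast_mul, mul_comm]

/-- Upper negation `C(d - 1 - e, d) = (-1)^d C(e, d)`, read modulo `p`. -/
lemma coeff_one_add_X_pow_eq_coeff_one_sub_X_pow {E e d : ℕ} (hd : d < p)
    (h : (E + e + 1 : K) = d) : ((1 + X) ^ E).coeff d = ((1 - X : K[X]) ^ e).coeff d := by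
  rw [coeff_one_add_X_pow, show (1 - X : K[X]) = 1 + C (-1) * X by simp [sub_eq_add_neg],
    coeff_one_add_C_mul_X_pow, natCast_choose_eq_descPochhammer_div E hd,
    natCast_choose_eq_descPochhammer_div e hd, descPochhammer_eval_eq_ascPochhammer,
    show (E : K) - d + 1 = -e by linear_combination h, ascPochhammer_eval_neg_eq_descPochhammer]
  ring

/-- Pfaff's transformation, on the coefficient of `X^(p-1)`: expand
`1 + μX = (1 + X) + (μ - 1)X` binomially and flip each `(1 + X)^(a + b - k)`. -/
lemma coeff_pred_pfaff (μ : K) {a b e : ℕ} (h : (a + b + e + 2 : K) = 0) :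
    ((1 + X) ^ a * (1 + C μ * X) ^ b).coeff (p - 1)
      = ((1 + C (μ - 1) * X) ^ b * (1 - X : K[X]) ^ e).coeff (p - 1) := by
  have hL : (1 + X) ^ a * (1 + C μ * X) ^ b = ∑ k ∈ range (b + 1),
      C (b.choose k * (μ - 1) ^ k) * (X ^ k * (1 + X) ^ (a + (b - k))) := by
    rw [show (1 + C μ * X : K[X]) = C (μ - 1) * X + (1 + X) by rw [C_sub, C_1]; ring,
      add_pow (C (μ - 1) * X), mul_sum]
    refine sum_congr rfl fun k _ => ?_
    simp only [map_mul, map_pow, map_natCast, pow_add]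
    ring
  have hR : (1 + C (μ - 1) * X) ^ b * (1 - X) ^ e = ∑ k ∈ range (b + 1),
      C (b.choose k * (μ - 1) ^ k) * (X ^ k * (1 - X) ^ e) := by
    rw [add_comm 1, add_pow (C (μ - 1) * X), sum_mul]
    refine sum_congr rfl fun k _ => ?_
    simp only [map_mul, map_pow, map_natCast, one_pow]
    ring
  rw [hL, hR, finsetSum_coeff, finsetSum_coeff]
  refine sum_congr rfl fun k hk => ?_
  rw [coeff_C_mul, coeff_C_mul, coeff_X_pow_mul', coeff_X_pow_mul']
  split_ifs with hkp
  · have hkb : k ≤ b := Nat.lt_succ_iff.mp (mem_range.mp hk)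
    have hp : (p : K) = 0 := CharP.cast_eq_zero K p
    have hp0 := (Fact.out : p.Prime).pos
    rw [coeff_one_add_X_pow_eq_coeff_one_sub_X_pow (e := e) (by omega)]
    push_cast [Nat.cast_sub hkb, Nat.cast_sub hkp, Nat.cast_sub (Fact.out : p.Prime).one_le]
    linear_combination h - hp
  · rfl

lemma coeff_pred_derivative_eq_zero (f : K[X]) : (derivative f).coeff (p - 1) = 0 := by
  rw [coeff_derivative, Nat.sub_add_cancel (Fact.out : p.Prime).one_le]
  have hp : ((p - 1 : ℕ) : K) + 1 = 0 := by
    rw [← Nat.cast_succ, Nat.succ_eq_add_one, Nat.sub_add_cancel (Fact.out : p.Prime).one_le,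
      CharP.cast_eq_zero]
  rw [hp, mul_zero]

/-- If `σ(m + 1) + τ(n + 1) = 0`, the derivative of `(1 + σX)^(m+1) (1 + τX)^(n+1)` is
`σ τ (m + n + 2) X (1 + σX)^m (1 + τX)^n`, whose coefficient of `X^(p-1)` vanishes. -/
lemma coeff_pred_pow_mul_pow_succ_eq {σ τ : K} {m n : ℕ}
    (hA : σ * (m + 1) + τ * (n + 1) = 0) (hB : σ * τ * (m + n + 2) ≠ 0) :
    ((1 + C τ * X) ^ n * (1 + C σ * X) ^ (m + 1)).coeff (p - 1)
      = ((1 + C σ * X) ^ m * (1 + C τ * X) ^ (n + 1)).coeff (p - 1) := by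
  set u : K[X] := 1 + C σ * X
  set v : K[X] := 1 + C τ * X
  have hp2 : p - 1 = p - 2 + 1 := by have := (Fact.out : p.Prime).two_le; omega
  have hderiv : derivative (u ^ (m + 1) * v ^ (n + 1))
      = C (σ * τ * (m + n + 2)) * X * (u ^ m * v ^ n)
        + C (σ * (m + 1) + τ * (n + 1)) * (u ^ m * v ^ n) := by
    have hu : derivative u = C σ := by simp [u]
    have hv : derivative v = C τ := by simp [v]
    simp only [derivative_mul, derivative_pow_succ, hu, hv, map_add, map_mul, map_natCast,
      map_ofNat, map_one]
    simp only [u, v]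
    ring
  have hG : (u ^ m * v ^ n).coeff (p - 2) = 0 := by
    have := coeff_pred_derivative_eq_zero (p := p) (u ^ (m + 1) * v ^ (n + 1))
    rw [hderiv, hA, C_0, zero_mul, add_zero, hp2, mul_assoc, coeff_C_mul, coeff_X_mul] at this
    exact (mul_eq_zero.mp this).resolve_left hB
  rw [← sub_eq_zero, ← coeff_sub,
    show v ^ n * u ^ (m + 1) - u ^ m * v ^ (n + 1) = C (σ - τ) * X * (u ^ m * v ^ n) by
      simp only [u, v, C_sub]; ring,
    hp2, mul_assoc, coeff_C_mul, coeff_X_mul, hG, mul_zero]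

end CharP

section ZModP

variable {p : ℕ} [Fact p.Prime]

lemma coeff_pred_pow_mul_pow_rescale {κ : ZMod p} (hκ : κ ≠ 0) (μ ν : ZMod p) (M N : ℕ) :
    ((1 + C (κ * μ) * X) ^ M * (1 + C (κ * ν) * X) ^ N).coeff (p - 1)
      = ((1 + C μ * X) ^ M * (1 + C ν * X) ^ N).coeff (p - 1) := by
  have hcomp : (1 + C (κ * μ) * X) ^ M * (1 + C (κ * ν) * X) ^ N
      = ((1 + C μ * X) ^ M * (1 + C ν * X) ^ N).comp (C κ * X) := by
    simp only [mul_comp, pow_comp, add_comp, one_comp, C_comp, X_comp, C_mul]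
    ring
  rw [hcomp, comp_C_mul_X_coeff, ZMod.pow_card_sub_one_eq_one hκ, mul_one]

lemma natDegree_bPoly_le (r s : ℕ) : (bPoly p r s).natDegree ≤ p - 1 := by
  refine natDegree_sum_le_of_forall_le _ _ fun k hk => ?_
  refine natDegree_mul_le.trans ((add_le_add ((natDegree_C_mul_le _ _).trans
    (natDegree_descPochhammer_eval_C_mul_X_sub_one_le _ _))
    (natDegree_descPochhammer_eval_C_mul_X_sub_one_le _ _)).trans ?_)
  have := mem_range.mp hk
  omega

lemma eval_bPoly_eq_coeff (r s : ℕ) (x : ZMod p) {a b : ℕ} (ha : (a : ZMod p) = r * x - 1)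
    (hb : (b : ZMod p) = s * x - 1) :
    (bPoly p r s).eval x = ((1 + X) ^ a * (1 + C (-(r : ZMod p) / s) * X) ^ b).coeff (p - 1) := by
  rw [coeff_mul, ← Finset.Nat.sum_antidiagonal_swap,
    Finset.Nat.sum_antidiagonal_eq_sum_range_succ_mk, Nat.succ_eq_add_one,
    Nat.sub_add_cancel (Fact.out : p.Prime).one_le, bPoly, eval_finsetSum]
  refine sum_congr rfl fun k hk => ?_
  have hkp : k < p := mem_range.mp hk
  have hdp : p - 1 - k < p := by omega
  simp only [Prod.swap_prod_mk, eval_mul, eval_C, descPochhammer_eval_eq_comp, eval_comp,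
    eval_sub, eval_X, eval_one, coeff_one_add_X_pow, coeff_one_add_C_mul_X_pow,
    natCast_choose_eq_descPochhammer_div a hdp, natCast_choose_eq_descPochhammer_div b hkp, ha, hb]
  have hdfac := natCast_factorial_ne_zero_of_lt (K := ZMod p) hdp
  have hkfac := natCast_factorial_ne_zero_of_lt (K := ZMod p) hkp
  field_simp

lemma eval_bPoly_one_eq_coeff {s : ℕ} (hs : (s : ZMod p) ≠ 0) (x : ZMod p) {b e : ℕ}
    (hb : (b : ZMod p) = s * x - 1) (he : (e : ZMod p) = -(s + 1) * x) :
    (bPoly p 1 s).eval x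
      = ((1 + C ((s : ZMod p) + 1) * X) ^ b * (1 + C (s : ZMod p) * X) ^ e).coeff (p - 1) := by
  have ha : (((x - 1).val : ℕ) : ZMod p) = (1 : ℕ) * x - 1 := by
    rw [ZMod.natCast_zmod_val, Nat.cast_one, one_mul]
  have hμ : -(s : ZMod p) * (-((1 : ℕ) : ZMod p) / s - 1) = s + 1 := by
    field_simp
    ring
  rw [eval_bPoly_eq_coeff 1 s x ha hb,
    coeff_pred_pfaff (e := e) _ (by rw [ZMod.natCast_zmod_val, hb, he]; ring),
    show (1 - X : (ZMod p)[X]) = 1 + C (-1) * X by simp [sub_eq_add_neg],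
    ← coeff_pred_pow_mul_pow_rescale (neg_ne_zero.mpr hs), hμ, neg_mul_neg, mul_one]

lemma eval_zero_bPoly_one_eq_one {s : ℕ} (hs : (s : ZMod p) ≠ 0)
    (hs1 : (s : ZMod p) + 1 ≠ 0) :
    (bPoly p 1 s).eval 0 = 1 := by
  have hp1 : ((p - 1 : ℕ) : ZMod p) = s * 0 - 1 := by
    rw [Nat.cast_pred (Fact.out : p.Prime).pos, ZMod.natCast_self, mul_zero]
  rw [eval_bPoly_one_eq_coeff hs 0 hp1 (e := 0) (by simp), pow_zero, mul_one,
    coeff_one_add_C_mul_X_pow, Nat.choose_self, Nat.cast_one, one_mul,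
    ZMod.pow_card_sub_one_eq_one hs1]

lemma eval_bPoly_one_eq_of_eq_neg_add_one {s s' : ℕ} (hs : (s : ZMod p) ≠ 0)
    (hs' : (s' : ZMod p) ≠ 0) (h : (s' : ZMod p) = -(s + 1)) (x : ZMod p) :
    (bPoly p 1 s).eval x = (bPoly p 1 s').eval x := by
  have hs1 : (s : ZMod p) + 1 ≠ 0 := neg_ne_zero.mp (h ▸ hs')
  obtain rfl | hx := eq_or_ne x 0
  · rw [eval_zero_bPoly_one_eq_one hs hs1,
      eval_zero_bPoly_one_eq_one hs' (by rw [h]; simpa using hs)]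
  obtain ⟨n, hn⟩ : ∃ n : ℕ, (n : ZMod p) = s * x - 1 := ⟨_, ZMod.natCast_zmod_val _⟩
  obtain ⟨m, hm⟩ : ∃ m : ℕ, (m : ZMod p) = s' * x - 1 := ⟨_, ZMod.natCast_zmod_val _⟩
  rw [eval_bPoly_one_eq_coeff hs x hn (e := m + 1) (by push_cast; rw [hm, h]; ring),
    eval_bPoly_one_eq_coeff hs' x hm (e := n + 1) (by push_cast; rw [hn, h]; ring),
    show (s' : ZMod p) + 1 = -1 * s by rw [h]; ring,
    show (s' : ZMod p) = -1 * (s + 1) by rw [h]; ring,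
    coeff_pred_pow_mul_pow_rescale (neg_ne_zero.mpr one_ne_zero)]
  refine coeff_pred_pow_mul_pow_succ_eq (by rw [hm, hn, h]; ring) ?_
  rw [show (s : ZMod p) * (s + 1) * (m + n + 2) = -(s * (s + 1) * x) by rw [hm, hn, h]; ring]
  exact neg_ne_zero.mpr (mul_ne_zero (mul_ne_zero hs hs1) hx)

end ZModP

theorem stmt14_general (p s : ℕ) [Fact p.Prime] (hs0 : 0 < s) (hsp : s < p - 1) :
    bPoly p 1 s = bPoly p 1 (p - 1 - s) := by
  have hne : ∀ {u : ℕ}, 0 < u → u < p → (u : ZMod p) ≠ 0 := fun h0 hlt =>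
    (ZMod.natCast_eq_zero_iff _ p).not.mpr (Nat.not_dvd_of_pos_of_lt h0 hlt)
  have hsum : ((p - 1 - s : ℕ) : ZMod p) = -(s + 1) := by
    rw [Nat.cast_sub (by omega), Nat.cast_pred (by omega), ZMod.natCast_self]
    ring
  refine eq_of_natDegree_lt_card_of_eval_eq _ _ Function.injective_id
    (eval_bPoly_one_eq_of_eq_neg_add_one (hne hs0 (by omega)) (hne (by omega) (by omega)) hsum) ?_
  rw [ZMod.card, max_lt_iff]
  exact ⟨(natDegree_bPoly_le 1 s).trans_lt (by omega),
    (natDegree_bPoly_le 1 (p - 1 - s)).trans_lt (by omega)⟩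

theorem stmt14 (p s : ℕ) [Fact p.Prime] (hodd : Odd p) (hs0 : 0 < s) (hsp : s < p - 1) :
    bPoly p 1 s = bPoly p 1 (p - 1 - s) :=
  stmt14_general p s hs0 hsp
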